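/- Let T₀ ∈ ℝ, Δ > 0 and T > 3Δ, and let w : ℝ → ℝ be measurable with 0 ≤ w(t) ≤ 1 for t ∈ [T₀, T₀+T−Δ] and w(t) = 1 for t ∈ [T₀+Δ, T₀+T−2Δ]. Let a ∈ ℂ with a ≠ 0, ω ∈ ℂ with Im ω ≤ 0, ρ : ℝ → ℂ continuous, and y(t) := a·exp(−iωt) + ρ(t); set y₀(t) := a·exp(−iωt), z := exp(−iωΔ), ε₀ := ‖ρ‖_w/‖y₀‖_w, ε₁ := ‖S_Δρ‖_w/‖y₀‖_w, ε := max(ε₀,ε₁), and ẑ := ⟨S_Δ y, y⟩_w / ⟨y, y⟩_w. If ε ≤ min(1/8, |z|/20), then ẑ ≠ 0, |ẑ − z| ≤ |z|/2, and there exists k ∈ ℤ such that |(i/Δ)·(Log ẑ + 2πik) − ω| ≤ 10ε/(Δ|z|). -/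

import Mathlib

/-!
Write `y = y₀ + ρ` and `S_Δ y = z • y₀ + S_Δ ρ`. For `w ≥ 0`, `⟨f, g⟩_w` is the `L²` inner product
`⟪g, f⟫` for the measure `w(t) dt` on `(T₀, T₀ + T - Δ]`, so `ẑ = ⟪y, S_Δ y⟫ / ‖y‖²` is a Rayleigh
quotient and `ẑ - z = ⟪y, S_Δ ρ - z • ρ⟫ / ‖y‖²`. Cauchy–Schwarz together with
`‖y‖ ≥ (1 - ε) ‖y₀‖` gives `|ẑ - z| ≤ 2ε / (1 - ε) ≤ 16ε / 7`; in particular `ẑ / z = 1 + u` with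
`|u| ≤ 1/2`. Since `Log ẑ + iωΔ` and `Log (1 + u)` differ by a multiple of `2πi` and
`|Log (1 + u)| ≤ 3|u| / 2`, the frequency is recovered up to `24ε / (7Δ|z|)`.
-/

open MeasureTheory

open scoped InnerProductSpace ComplexConjugate

section RayleighQuotient

variable {𝕜 E : Type*} [RCLike 𝕜] [SeminormedAddCommGroup E] [InnerProductSpace 𝕜 E]

theorem norm_inner_div_inner_self_sub_le {y₀ ρ ρ' : E} {z : 𝕜} {ε : ℝ} (hz : ‖z‖ ≤ 1)
    (hε : ε < 1) (hy₀ : 0 < ‖y₀‖) (hρ : ‖ρ‖ ≤ ε * ‖y₀‖) (hρ' : ‖ρ'‖ ≤ ε * ‖y₀‖) :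
    ‖⟪y₀ + ρ, z • y₀ + ρ'⟫_𝕜 / ⟪y₀ + ρ, y₀ + ρ⟫_𝕜 - z‖ ≤ 2 * ε / (1 - ε) := by
  set y := y₀ + ρ
  have hε0 : 0 ≤ ε := nonneg_of_mul_nonneg_left ((norm_nonneg ρ).trans hρ) hy₀
  have hy : (1 - ε) * ‖y₀‖ ≤ ‖y‖ := by
    have := norm_sub_norm_le y₀ (-ρ)
    rw [norm_neg, sub_neg_eq_add] at this
    linarith
  have hy_pos : 0 < ‖y‖ := lt_of_lt_of_le (by nlinarith) hy
  have hd : ‖ρ' - z • ρ‖ ≤ 2 * ε * ‖y₀‖ := by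
    calc ‖ρ' - z • ρ‖ ≤ ‖ρ'‖ + ‖z‖ * ‖ρ‖ := (norm_sub_le _ _).trans_eq (by rw [norm_smul])
      _ ≤ ε * ‖y₀‖ + 1 * (ε * ‖y₀‖) := by gcongr
      _ = 2 * ε * ‖y₀‖ := by ring
  have key : ⟪y, z • y₀ + ρ'⟫_𝕜 / ⟪y, y⟫_𝕜 - z = ⟪y, ρ' - z • ρ⟫_𝕜 / (‖y‖ : 𝕜) ^ 2 := by
    have hy0 : (‖y‖ : 𝕜) ≠ 0 := RCLike.ofReal_ne_zero.mpr hy_pos.ne'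
    rw [show z • y₀ + ρ' = z • y + (ρ' - z • ρ) by simp only [y, smul_add]; abel,
      inner_add_right, inner_smul_right, inner_self_eq_norm_sq_to_K]
    field_simp
    ring
  rw [key, norm_div, norm_pow, RCLike.norm_ofReal, abs_norm]
  calc ‖⟪y, ρ' - z • ρ⟫_𝕜‖ / ‖y‖ ^ 2 ≤ ‖y‖ * ‖ρ' - z • ρ‖ / ‖y‖ ^ 2 := by
        gcongr; exact norm_inner_le_norm _ _
    _ = ‖ρ' - z • ρ‖ / ‖y‖ := by field_simp
    _ ≤ 2 * ε * ‖y₀‖ / ((1 - ε) * ‖y₀‖) := by gcongr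
    _ = 2 * ε / (1 - ε) := by field_simp

end RayleighQuotient

section WithDensity

variable {α : Type*} [MeasurableSpace α] {μ : Measure α} {w : α → ℝ}

theorem inner_toLp_withDensity_ofReal (hwm : Measurable w) (hw : ∀ᵐ t ∂μ, 0 ≤ w t)
    {f g : α → ℂ} (hf : MemLp f 2 (μ.withDensity fun t => ENNReal.ofReal (w t)))
    (hg : MemLp g 2 (μ.withDensity fun t => ENNReal.ofReal (w t))) :
    ⟪hg.toLp g, hf.toLp f⟫_ℂ = ∫ t, (w t : ℂ) * f t * conj (g t) ∂μ := by
  rw [L2.inner_def, integral_congr_ae (hg.coeFn_toLp.mp (hf.coeFn_toLp.mono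
      fun t hft hgt => by rw [hft, hgt])),
    integral_withDensity_eq_integral_toReal_smul hwm.ennreal_ofReal
      (.of_forall fun _ => ENNReal.ofReal_lt_top)]
  refine integral_congr_ae (hw.mono fun t ht => ?_)
  simp only [ENNReal.toReal_ofReal ht, RCLike.inner_apply, Complex.real_smul]
  ring

theorem isFiniteMeasure_withDensity_ofReal_of_ae_le_one [IsFiniteMeasure μ]
    (hw : ∀ᵐ t ∂μ, w t ≤ 1) : IsFiniteMeasure (μ.withDensity fun t => ENNReal.ofReal (w t)) := by
  refine isFiniteMeasure_withDensity (ne_top_of_le_ne_top (measure_ne_top μ Set.univ) ?_)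
  calc ∫⁻ t, ENNReal.ofReal (w t) ∂μ ≤ ∫⁻ _, 1 ∂μ :=
        lintegral_mono_ae (hw.mono fun t ht => ENNReal.ofReal_le_one.mpr ht)
    _ = μ Set.univ := lintegral_one

theorem withDensity_ofReal_ne_zero (hwm : Measurable w) {s : Set α} (hs : μ s ≠ 0)
    (hw : ∀ t ∈ s, 0 < w t) : μ.withDensity (fun t => ENNReal.ofReal (w t)) ≠ 0 := by
  rw [Ne, withDensity_eq_zero_iff hwm.ennreal_ofReal.aemeasurable]
  refine fun h => hs (measure_eq_zero_iff_ae_notMem.mpr ?_)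
  filter_upwards [h] with t ht hts
  exact (ENNReal.ofReal_eq_zero.mp ht).not_gt (hw t hts)

theorem MeasureTheory.MemLp.toLp_ne_zero {E : Type*} [NormedAddCommGroup E] {p : ENNReal}
    {f : α → E} (hf : MemLp f p μ) (hf0 : ∀ t, f t ≠ 0) (hμ : μ ≠ 0) : hf.toLp f ≠ 0 := by
  rw [Ne, Lp.eq_zero_iff_ae_eq_zero]
  refine fun h => hμ (ae_eq_bot.mp (Filter.eventually_false_iff_eq_bot.mp ?_))
  filter_upwards [hf.coeFn_toLp, h] with t hft ht
  exact hf0 t (hft ▸ ht)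

theorem Continuous.memLp_of_ae_mem_isCompact {E : Type*} [TopologicalSpace α]
    [OpensMeasurableSpace α] [NormedAddCommGroup E] [SecondCountableTopologyEither α E]
    [IsFiniteMeasure μ] {K : Set α} (hK : IsCompact K) (hKμ : ∀ᵐ t ∂μ, t ∈ K) {f : α → E}
    (hf : Continuous f) (p : ENNReal) : MemLp f p μ := by
  obtain ⟨C, hC⟩ := hK.exists_bound_of_continuousOn hf.continuousOn
  exact MemLp.of_bound hf.aestronglyMeasurable C (hKμ.mono hC)

end WithDensity

noncomputable def weightedMeasure (w : ℝ → ℝ) (a b : ℝ) : Measure ℝ :=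
  (volume.restrict (Set.Ioc a b)).withDensity fun t => ENNReal.ofReal (w t)

noncomputable def weightedInner (w : ℝ → ℝ) (a b : ℝ) (f g : ℝ → ℂ) : ℂ :=
  ∫ t in a..b, (w t : ℂ) * f t * conj (g t)

noncomputable def weightedNorm (w : ℝ → ℝ) (a b : ℝ) (f : ℝ → ℂ) : ℝ :=
  √(weightedInner w a b f f).re

section Weighted

variable {w : ℝ → ℝ} {a b : ℝ}

theorem memLp_weightedMeasure (hw : ∀ t ∈ Set.Icc a b, w t ≤ 1) {f : ℝ → ℂ}
    (hf : Continuous f) : MemLp f 2 (weightedMeasure w a b) := by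
  have hIcc : ∀ᵐ t ∂volume.restrict (Set.Ioc a b), t ∈ Set.Icc a b :=
    ae_restrict_of_forall_mem measurableSet_Ioc fun _ => Set.mem_Icc_of_Ioc
  have := isFiniteMeasure_withDensity_ofReal_of_ae_le_one (hIcc.mono hw)
  exact hf.memLp_of_ae_mem_isCompact isCompact_Icc
    ((withDensity_absolutelyContinuous _ _).ae_le hIcc) 2

theorem weightedInner_eq_inner_toLp (hab : a ≤ b) (hwm : Measurable w)
    (hw : ∀ t ∈ Set.Icc a b, 0 ≤ w t) {f g : ℝ → ℂ} (hf : MemLp f 2 (weightedMeasure w a b))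
    (hg : MemLp g 2 (weightedMeasure w a b)) :
    weightedInner w a b f g = ⟪hg.toLp g, hf.toLp f⟫_ℂ := by
  rw [weightedInner, intervalIntegral.integral_of_le hab]
  exact (inner_toLp_withDensity_ofReal hwm (ae_restrict_of_forall_mem measurableSet_Ioc
    fun t ht => hw t (Set.mem_Icc_of_Ioc ht)) hf hg).symm

theorem weightedNorm_eq_norm_toLp (hab : a ≤ b) (hwm : Measurable w)
    (hw : ∀ t ∈ Set.Icc a b, 0 ≤ w t) {f : ℝ → ℂ} (hf : MemLp f 2 (weightedMeasure w a b)) :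
    weightedNorm w a b f = ‖hf.toLp f‖ := by
  rw [weightedNorm, weightedInner_eq_inner_toLp hab hwm hw hf hf, norm_eq_sqrt_re_inner (𝕜 := ℂ)]
  rfl

theorem weightedMeasure_ne_zero (hwm : Measurable w) {c d : ℝ} (hcd : c < d)
    (hsub : Set.Ioc c d ⊆ Set.Ioc a b) (hw : ∀ t ∈ Set.Ioc c d, 0 < w t) :
    weightedMeasure w a b ≠ 0 := by
  refine withDensity_ofReal_ne_zero hwm ?_ hw
  rw [Measure.restrict_apply measurableSet_Ioc, Set.inter_eq_left.mpr hsub, Real.volume_Ioc]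
  exact (ENNReal.ofReal_pos.mpr (sub_pos.mpr hcd)).ne'

theorem weightedNorm_pos (hab : a ≤ b) (hwm : Measurable w) (hw : ∀ t ∈ Set.Icc a b, 0 ≤ w t)
    {f : ℝ → ℂ} (hf : MemLp f 2 (weightedMeasure w a b)) (hf0 : ∀ t, f t ≠ 0)
    (hμ : weightedMeasure w a b ≠ 0) : 0 < weightedNorm w a b f := by
  rw [weightedNorm_eq_norm_toLp hab hwm hw hf]
  exact norm_pos_iff.mpr (hf.toLp_ne_zero hf0 hμ)

theorem norm_weightedInner_div_sub_le (hab : a ≤ b) (hwm : Measurable w)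
    (hw : ∀ t ∈ Set.Icc a b, 0 ≤ w t) {y₀ ρ ρ' : ℝ → ℂ} (hy₀ : MemLp y₀ 2 (weightedMeasure w a b))
    (hρ : MemLp ρ 2 (weightedMeasure w a b)) (hρ' : MemLp ρ' 2 (weightedMeasure w a b))
    {z : ℂ} {ε : ℝ} (hz : ‖z‖ ≤ 1) (hε : ε < 1) (hy₀_pos : 0 < weightedNorm w a b y₀)
    (hρ_le : weightedNorm w a b ρ ≤ ε * weightedNorm w a b y₀)
    (hρ'_le : weightedNorm w a b ρ' ≤ ε * weightedNorm w a b y₀) :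
    ‖weightedInner w a b (z • y₀ + ρ') (y₀ + ρ) / weightedInner w a b (y₀ + ρ) (y₀ + ρ) - z‖
      ≤ 2 * ε / (1 - ε) := by
  rw [weightedNorm_eq_norm_toLp hab hwm hw hy₀] at hy₀_pos hρ_le hρ'_le
  rw [weightedNorm_eq_norm_toLp hab hwm hw hρ] at hρ_le
  rw [weightedNorm_eq_norm_toLp hab hwm hw hρ'] at hρ'_le
  rw [weightedInner_eq_inner_toLp hab hwm hw ((hy₀.const_smul z).add hρ') (hy₀.add hρ),
    weightedInner_eq_inner_toLp hab hwm hw (hy₀.add hρ) (hy₀.add hρ),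
    MemLp.toLp_add hy₀ hρ, MemLp.toLp_add (hy₀.const_smul z) hρ', MemLp.toLp_const_smul z hy₀]
  exact norm_inner_div_inner_self_sub_le hz hε hy₀_pos hρ_le hρ'_le

end Weighted

theorem norm_exp_neg_I_mul_le_one {ω : ℂ} {Δ : ℝ} (hω : ω.im ≤ 0) (hΔ : 0 ≤ Δ) :
    ‖Complex.exp (-Complex.I * ω * Δ)‖ ≤ 1 := by
  rw [Complex.norm_exp, Real.exp_le_one_iff]
  simpa using mul_nonpos_of_nonpos_of_nonneg hω hΔ

theorem shift_add_eq_smul_add {a ω z : ℂ} {Δ : ℝ} {y₀ ρ : ℝ → ℂ}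
    (hy₀ : y₀ = fun t : ℝ => a * Complex.exp (-Complex.I * ω * t))
    (hz : z = Complex.exp (-Complex.I * ω * Δ)) :
    (fun t => (y₀ + ρ) (t + Δ)) = z • y₀ + fun t => ρ (t + Δ) := by
  ext t
  simp only [hy₀, hz, Pi.add_apply, Pi.smul_apply, smul_eq_mul]
  rw [show -Complex.I * ω * ((t + Δ : ℝ) : ℂ) = -Complex.I * ω * Δ + -Complex.I * ω * t by
    push_cast; ring, Complex.exp_add]
  ring

theorem ne_zero_of_norm_sub_le_half {E : Type*} [NormedAddCommGroup E] {x y : E} (hy : y ≠ 0)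
    (h : ‖x - y‖ ≤ ‖y‖ / 2) : x ≠ 0 := by
  rintro rfl
  rw [zero_sub, norm_neg] at h
  linarith [norm_pos_iff.mpr hy]

theorem exists_int_norm_frequency_sub_le {ζ z ω : ℂ} {Δ : ℝ} (hΔ : 0 < Δ)
    (hz : z = Complex.exp (-Complex.I * ω * Δ)) (hζ : ‖ζ - z‖ ≤ ‖z‖ / 2) :
    ∃ k : ℤ, ‖Complex.I / Δ * (Complex.log ζ + 2 * Real.pi * Complex.I * k) - ω‖
      ≤ 3 / 2 * ‖ζ - z‖ / (Δ * ‖z‖) := by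
  have hz0 : z ≠ 0 := hz ▸ Complex.exp_ne_zero _
  have hz_pos : 0 < ‖z‖ := norm_pos_iff.mpr hz0
  have hζ0 : ζ ≠ 0 := ne_zero_of_norm_sub_le_half hz0 hζ
  set u := ζ / z - 1
  have hu : ‖u‖ = ‖ζ - z‖ / ‖z‖ := by
    rw [show u = (ζ - z) / z from div_sub_one hz0, norm_div]
  have hu_half : ‖u‖ ≤ 1 / 2 := by
    rw [hu, div_le_iff₀ hz_pos]
    linarith
  have h1u : 1 + u = ζ / z := by ring
  have hexp : Complex.exp (Complex.log ζ - Complex.log (1 + u) + Complex.I * ω * Δ) = 1 := by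
    rw [Complex.exp_add, Complex.exp_sub, Complex.exp_log hζ0, h1u,
      Complex.exp_log (div_ne_zero hζ0 hz0), div_div_cancel₀ hζ0, hz, ← Complex.exp_add]
    simp
  obtain ⟨n, hn⟩ := Complex.exp_eq_one_iff.mp hexp
  refine ⟨-n, ?_⟩
  have hΔ0 : (Δ : ℂ) ≠ 0 := Complex.ofReal_ne_zero.mpr hΔ.ne'
  have hsub : Complex.I / Δ * (Complex.log ζ + 2 * Real.pi * Complex.I * ((-n : ℤ) : ℂ)) - ω
      = Complex.I / Δ * Complex.log (1 + u) := by
    have hlog : Complex.log ζ + 2 * Real.pi * Complex.I * ((-n : ℤ) : ℂ)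
        = Complex.log (1 + u) - Complex.I * ω * Δ := by
      push_cast
      linear_combination hn
    rw [hlog]
    field_simp
    linear_combination (-ω * Δ) * Complex.I_sq
  rw [hsub, norm_mul, norm_div, Complex.norm_I, Complex.norm_real, Real.norm_of_nonneg hΔ.le]
  calc 1 / Δ * ‖Complex.log (1 + u)‖ ≤ 1 / Δ * (3 / 2 * ‖u‖) := by
        gcongr; exact Complex.norm_log_one_add_half_le_self hu_half
    _ = 3 / 2 * ‖ζ - z‖ / (Δ * ‖z‖) := by rw [hu]; field_simp

/-- Deterministic one-mode frequency extraction: the shift Rayleigh quotient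
estimator combined with a logarithm branch recovers the complex frequency with
an explicit error bound. -/
theorem one_mode_frequency_extraction
    (T₀ T Δ : ℝ) (hΔ : 0 < Δ) (hT : 3 * Δ < T)
    (w : ℝ → ℝ) (hwm : Measurable w)
    (hw : ∀ t ∈ Set.Icc T₀ (T₀ + T - Δ), 0 ≤ w t ∧ w t ≤ 1)
    (hw1 : ∀ t ∈ Set.Icc (T₀ + Δ) (T₀ + T - 2 * Δ), w t = 1)
    (a ω : ℂ) (ha : a ≠ 0) (hω : ω.im ≤ 0)
    (ρ : ℝ → ℂ) (hρ : Continuous ρ)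
    (y₀ y : ℝ → ℂ)
    (hy₀ : y₀ = fun t : ℝ => a * Complex.exp (-Complex.I * ω * (t : ℂ)))
    (hy : y = fun t : ℝ => a * Complex.exp (-Complex.I * ω * (t : ℂ)) + ρ t)
    (z : ℂ) (hz : z = Complex.exp (-Complex.I * ω * (Δ : ℂ)))
    (ip : (ℝ → ℂ) → (ℝ → ℂ) → ℂ)
    (hip : ip = fun f g => ∫ t in T₀..(T₀ + T - Δ),
      ((w t : ℂ) * f t * (starRingEnd ℂ) (g t)))
    (nw : (ℝ → ℂ) → ℝ)
    (hnw : nw = fun f => Real.sqrt (ip f f).re)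
    (ε₀ ε₁ ε : ℝ)
    (hε₀ : ε₀ = nw ρ / nw y₀)
    (hε₁ : ε₁ = nw (fun t => ρ (t + Δ)) / nw y₀)
    (hε : ε = max ε₀ ε₁)
    (zhat : ℂ)
    (hzhat : zhat = ip (fun t => y (t + Δ)) y / ip y y)
    (hsmall : ε ≤ min (1 / 8) (‖z‖ / 20)) :
    zhat ≠ 0 ∧
    ‖zhat - z‖ ≤ ‖z‖ / 2 ∧
    ∃ k : ℤ,
      ‖(Complex.I / (Δ : ℂ)) *
          (Complex.log zhat + 2 * Real.pi * Complex.I * (k : ℂ)) - ω‖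
        ≤ 10 * ε / (Δ * ‖z‖) := by
  obtain rfl : ip = weightedInner w T₀ (T₀ + T - Δ) := hip
  obtain rfl : nw = weightedNorm w T₀ (T₀ + T - Δ) := hnw
  have hab : T₀ ≤ T₀ + T - Δ := by linarith
  have hw0 : ∀ t ∈ Set.Icc T₀ (T₀ + T - Δ), 0 ≤ w t := fun t ht => (hw t ht).1
  have hL2 {f : ℝ → ℂ} (hf : Continuous f) := memLp_weightedMeasure (fun t ht => (hw t ht).2) hf
  have hy₀c : Continuous y₀ := by rw [hy₀]; fun_prop
  have hρ'c : Continuous fun t => ρ (t + Δ) := by fun_prop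
  have hN : 0 < weightedNorm w T₀ (T₀ + T - Δ) y₀ :=
    weightedNorm_pos hab hwm hw0 (hL2 hy₀c)
      (fun t => by rw [hy₀]; exact mul_ne_zero ha (Complex.exp_ne_zero _))
      (weightedMeasure_ne_zero hwm (c := T₀ + Δ) (d := T₀ + T - 2 * Δ) (by linarith)
        (Set.Ioc_subset_Ioc (by linarith) (by linarith))
        fun t ht => by rw [hw1 t (Set.mem_Icc_of_Ioc ht)]; exact one_pos)
  have hρ_le : weightedNorm w T₀ (T₀ + T - Δ) ρ ≤ ε * weightedNorm w T₀ (T₀ + T - Δ) y₀ := by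
    rw [← div_le_iff₀ hN, ← hε₀, hε]
    exact le_max_left _ _
  have hρ'_le : weightedNorm w T₀ (T₀ + T - Δ) (fun t => ρ (t + Δ))
      ≤ ε * weightedNorm w T₀ (T₀ + T - Δ) y₀ := by
    rw [← div_le_iff₀ hN, ← hε₁, hε]
    exact le_max_right _ _
  have hε0 : 0 ≤ ε := nonneg_of_mul_nonneg_left ((Real.sqrt_nonneg _).trans hρ_le) hN
  obtain ⟨hε8, hεz⟩ := le_min_iff.mp hsmall
  obtain rfl : y = y₀ + ρ := by rw [hy, hy₀]; rfl
  have hclose : ‖zhat - z‖ ≤ 16 / 7 * ε := by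
    rw [hzhat, shift_add_eq_smul_add hy₀ hz]
    refine (norm_weightedInner_div_sub_le hab hwm hw0 (hL2 hy₀c) (hL2 hρ) (hL2 hρ'c)
      (hz ▸ norm_exp_neg_I_mul_le_one hω hΔ.le) (by linarith) hN hρ_le hρ'_le).trans ?_
    rw [div_le_iff₀ (by linarith)]
    nlinarith
  have hhalf : ‖zhat - z‖ ≤ ‖z‖ / 2 := by linarith
  obtain ⟨k, hk⟩ := exists_int_norm_frequency_sub_le hΔ hz hhalf
  refine ⟨ne_zero_of_norm_sub_le_half (hz ▸ Complex.exp_ne_zero _) hhalf, hhalf, k, hk.trans ?_⟩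
  gcongr ?_ / _
  linarith
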